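/- arXiv:2009.04545 — 5 statements merged into one kernel-verified Lean document; each statement's English description precedes it below -/
import Mathlib

section
/- For any fixed β > 0 and p > 0 there exists γ₀ = γ₀(β, p) > 2 such that for every γ with 2 < γ ≤ γ₀ the function f(u) = γ·h(u)·u(1−u) − u is of Fisher–KPP type on [0, ū(γ)]; that is: f(0) = 0, f(ū) = 0, f'(0) > 0, f'(ū) < 0, and f''(u) < 0 for every u with 0 < u < ū, where ū = ū(γ) is the unique solution in (0,1) of γ − 1 − γu = exp(−β((1+u)^{−p} − 1)). -/
open Real Set

/-- The switch function `h(u) = 1/(1 + exp(−β((1+u)^{−p} − 1)))`. -/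
noncomputable def hfun (β p u : ℝ) : ℝ :=
  1 / (1 + Real.exp (-(β * ((1 + u) ^ (-p) - 1))))

/-- The reaction term `f(u) = γ h(u) u (1−u) − u`. -/
noncomputable def ffun (γ β p u : ℝ) : ℝ :=
  γ * hfun β p u * u * (1 - u) - u

/-! ### Auxiliary definitions and lemmas -/

noncomputable def Efun (β p u : ℝ) : ℝ := Real.exp (-(β * ((1 + u) ^ (-p) - 1)))

noncomputable def phifun (β p : ℝ) : ℝ → ℝ := fun u => hfun β p u * (u * (1 - u))

lemma Efun_pos (β p u : ℝ) : 0 < Efun β p u := exp_pos _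

lemma one_add_Efun_pos (β p u : ℝ) : 0 < 1 + Efun β p u := by
  have := Efun_pos β p u; linarith

lemma hfun_eq (β p u : ℝ) : hfun β p u = (1 + Efun β p u)⁻¹ := by
  simp [hfun, Efun, one_div]

lemma hfun_pos (β p u : ℝ) : 0 < hfun β p u := by
  rw [hfun_eq]; exact inv_pos.mpr (one_add_Efun_pos β p u)

lemma hasDerivAt_Efun (β p x : ℝ) (hx : 0 < 1 + x) :
    HasDerivAt (Efun β p) (Efun β p x * (β * p * (1 + x) ^ (-p - 1))) x := by
  have h1 : HasDerivAt (fun u : ℝ => 1 + u) 1 x := (hasDerivAt_id x).const_add 1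
  have h2 : HasDerivAt (fun y : ℝ => y ^ (-p)) (-p * (1 + x) ^ (-p - 1)) (1 + x) :=
    Real.hasDerivAt_rpow_const (Or.inl (ne_of_gt hx))
  have h3 : HasDerivAt (fun u : ℝ => (1 + u) ^ (-p)) (-p * (1 + x) ^ (-p - 1) * 1) x :=
    h2.comp x h1
  have h4 : HasDerivAt (fun u : ℝ => -(β * ((1 + u) ^ (-p) - 1)))
      (-(β * (-p * (1 + x) ^ (-p - 1) * 1))) x := ((h3.sub_const 1).const_mul β).neg
  have h5 := (Real.hasDerivAt_exp _).comp x h4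
  convert h5 using 1
  case e'_9 => simp only [Efun]; ring
  all_goals rfl

lemma hasDerivAt_hfun (β p x : ℝ) (hx : 0 < 1 + x) :
    HasDerivAt (hfun β p)
      (-(Efun β p x * (β * p * (1 + x) ^ (-p - 1))) / (1 + Efun β p x) ^ 2) x := by
  have h := ((hasDerivAt_Efun β p x hx).const_add 1).inv (ne_of_gt (one_add_Efun_pos β p x))
  have : hfun β p = fun u => (1 + Efun β p u)⁻¹ := funext fun u => hfun_eq β p u
  rw [this]
  exact h

lemma deriv_hfun_neg (β p x : ℝ) (hβ : 0 < β) (hp : 0 < p) (hx : 0 < 1 + x) :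
    deriv (hfun β p) x < 0 := by
  rw [(hasDerivAt_hfun β p x hx).deriv]
  have e1 := Efun_pos β p x
  have e2 := Real.rpow_pos_of_pos hx (-p - 1)
  have h1 : (0:ℝ) < Efun β p x * (β * p * (1 + x) ^ (-p - 1)) := by positivity
  have h2 : (0:ℝ) < (1 + Efun β p x) ^ 2 := by positivity
  exact div_neg_of_neg_of_pos (neg_neg_iff_pos.mpr h1) h2

lemma contDiffOn_hfun (β p : ℝ) : ContDiffOn ℝ (⊤ : ℕ∞) (hfun β p) (Ioi (-1 : ℝ)) := by
  intro x hx
  have hx' : (0:ℝ) < 1 + x := by simp only [mem_Ioi] at hx; linarith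
  have c1 : ContDiffAt ℝ (⊤ : ℕ∞) (fun y : ℝ => y ^ (-p)) (1 + x) :=
    Real.contDiffAt_rpow_const_of_ne (ne_of_gt hx')
  have c2 : ContDiffAt ℝ (⊤ : ℕ∞) (fun u : ℝ => 1 + u) x := (contDiff_const.add contDiff_id).contDiffAt
  have c3 : ContDiffAt ℝ (⊤ : ℕ∞) (fun u : ℝ => (1 + u) ^ (-p)) x := c1.comp x c2
  have c4 : ContDiffAt ℝ (⊤ : ℕ∞) (fun u : ℝ => -(β * ((1 + u) ^ (-p) - 1))) x :=
    ((c3.sub contDiffAt_const).const_smul β).neg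
  have c5 : ContDiffAt ℝ (⊤ : ℕ∞) (fun u : ℝ => 1 + Efun β p u) x :=
    contDiffAt_const.add (Real.contDiff_exp.contDiffAt.comp x c4)
  have c6 : ContDiffAt ℝ (⊤ : ℕ∞) (fun u : ℝ => (1 + Efun β p u)⁻¹) x :=
    c5.inv (ne_of_gt (one_add_Efun_pos β p x))
  have : hfun β p = fun u => (1 + Efun β p u)⁻¹ := funext fun u => hfun_eq β p u
  rw [this]
  exact c6.contDiffWithinAt

lemma contDiffOn_phifun (β p : ℝ) : ContDiffOn ℝ (⊤ : ℕ∞) (phifun β p) (Ioi (-1 : ℝ)) :=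
  (contDiffOn_hfun β p).mul
    ((contDiff_id.mul (contDiff_const.sub contDiff_id)).contDiffOn)

lemma hasDerivAt_quad (x : ℝ) : HasDerivAt (fun u : ℝ => u * (1 - u)) (1 - 2*x) x := by
  have h := (hasDerivAt_id x).mul ((hasDerivAt_id x).const_sub 1)
  have h' : HasDerivAt (fun y : ℝ => y * (1 - y)) (1 * (1 - x) + x * (-1)) x := by
    simpa [id_eq, Pi.mul_def] using h
  convert h' using 1; ring

lemma hasDerivAt_phifun (β p x : ℝ) (hx : 0 < 1 + x) :
    HasDerivAt (phifun β p)
      (deriv (hfun β p) x * (x * (1 - x)) + hfun β p x * (1 - 2*x)) x := by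
  have hd := hasDerivAt_hfun β p x hx
  have h := hd.mul (hasDerivAt_quad x)
  rw [hd.deriv]
  exact h

lemma deriv_phifun_eventually (β p x : ℝ) (hx : 0 < 1 + x) :
    deriv (phifun β p) =ᶠ[nhds x]
      fun t => deriv (hfun β p) t * (t * (1 - t)) + hfun β p t * (1 - 2*t) := by
  have hs : Ioi (-1 : ℝ) ∈ nhds x := isOpen_Ioi.mem_nhds (by simp only [mem_Ioi]; linarith)
  filter_upwards [hs] with t ht
  have ht' : (0:ℝ) < 1 + t := by simp only [mem_Ioi] at ht; linarith
  exact (hasDerivAt_phifun β p t ht').deriv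

lemma hfun_zero (β p : ℝ) : hfun β p 0 = 1/2 := by
  simp [hfun, Real.one_rpow]
  norm_num

lemma deriv_hfun_zero (β p : ℝ) : deriv (hfun β p) 0 = -(β * p) / 4 := by
  have h := (hasDerivAt_hfun β p 0 (by norm_num)).deriv
  rw [h]
  have e0 : Efun β p 0 = 1 := by simp [Efun, Real.one_rpow]
  rw [e0]
  norm_num [Real.one_rpow]

lemma deriv2_phifun_zero (β p : ℝ) :
    deriv (deriv (phifun β p)) 0 = -(β * p) / 2 - 1 := by
  rw [(deriv_phifun_eventually β p 0 (by norm_num)).deriv_eq]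
  have hdiffg : DifferentiableAt ℝ (deriv (hfun β p)) 0 := by
    have h1 : ContDiffOn ℝ (⊤ : ℕ∞) (deriv (hfun β p)) (Ioi (-1 : ℝ)) :=
      (contDiffOn_hfun β p).deriv_of_isOpen isOpen_Ioi (mod_cast le_top)
    exact (h1.differentiableOn (by simp)).differentiableAt
      (isOpen_Ioi.mem_nhds (by norm_num))
  have hg : HasDerivAt (deriv (hfun β p)) (deriv (deriv (hfun β p)) 0) 0 :=
    hdiffg.hasDerivAt
  have h1 := hg.mul (hasDerivAt_quad 0)
  have hlin : HasDerivAt (fun t : ℝ => 1 - 2*t) (-2) 0 := by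
    have h := ((hasDerivAt_id (0:ℝ)).const_mul (2:ℝ)).const_sub 1
    simpa [id_eq] using h
  have h2 := (hasDerivAt_hfun β p 0 (by norm_num)).mul hlin
  have h3 := h1.add h2
  rw [show (fun t => deriv (hfun β p) t * (t * (1 - t)) + hfun β p t * (1 - 2 * t)) = ((deriv (hfun β p) * fun u => u * (1 - u)) + hfun β p * fun t => 1 - 2 * t) from rfl, h3.deriv]
  have e0 : Efun β p 0 = 1 := by simp [Efun, Real.one_rpow]
  rw [e0, hfun_zero β p, deriv_hfun_zero β p]
  norm_num [Real.one_rpow]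
  ring

lemma ffun_eq_phifun (γ β p : ℝ) : ffun γ β p = fun u => γ * phifun β p u - u := by
  funext u; simp only [ffun, phifun]; ring

lemma hasDerivAt_ffun (γ β p x : ℝ) (hx : 0 < 1 + x) :
    HasDerivAt (ffun γ β p)
      (γ * (deriv (hfun β p) x * (x * (1 - x)) + hfun β p x * (1 - 2*x)) - 1) x := by
  rw [ffun_eq_phifun]
  exact ((hasDerivAt_phifun β p x hx).const_mul γ).sub (hasDerivAt_id x)

lemma deriv_ffun_eventually (γ β p x : ℝ) (hx : 0 < 1 + x) :
    deriv (ffun γ β p) =ᶠ[nhds x] fun t => γ * deriv (phifun β p) t - 1 := by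
  have hs : Ioi (-1 : ℝ) ∈ nhds x := isOpen_Ioi.mem_nhds (by simp only [mem_Ioi]; linarith)
  filter_upwards [hs] with t ht
  have ht' : (0:ℝ) < 1 + t := by simp only [mem_Ioi] at ht; linarith
  have hφ := hasDerivAt_phifun β p t ht'
  have h := hasDerivAt_ffun γ β p t ht'
  rw [h.deriv, hφ.deriv]

/-- for any `β, p > 0` there is `γ₀ > 2` such that for all `2 < γ ≤ γ₀`
the reaction term `f` is of Fisher–KPP type on `[0, ū(γ)]`. -/
theorem f_is_KPP_type_of_gamma_near_two
    (β p : ℝ) (hβ : 0 < β) (hp : 0 < p) :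
    ∃ γ₀ > 2, ∀ γ : ℝ, 2 < γ → γ ≤ γ₀ →
      ∀ ub : ℝ, ub ∈ Set.Ioo (0 : ℝ) 1 →
        γ - 1 - γ * ub = Real.exp (-(β * ((1 + ub) ^ (-p) - 1))) →
        ffun γ β p 0 = 0 ∧ ffun γ β p ub = 0 ∧
        0 < deriv (ffun γ β p) 0 ∧ deriv (ffun γ β p) ub < 0 ∧
        ∀ u : ℝ, 0 < u → u < ub → deriv (deriv (ffun γ β p)) u < 0 := by
  -- continuity of the second derivative of φ near 0, negative value at 0
  have hd1 : ContDiffOn ℝ (⊤ : ℕ∞) (deriv (phifun β p)) (Ioi (-1 : ℝ)) :=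
    (contDiffOn_phifun β p).deriv_of_isOpen isOpen_Ioi (mod_cast le_top)
  have hcont : ContinuousOn (deriv (deriv (phifun β p))) (Ioi (-1 : ℝ)) :=
    hd1.continuousOn_deriv_of_isOpen isOpen_Ioi (mod_cast le_top)
  have hcontAt : ContinuousAt (deriv (deriv (phifun β p))) 0 :=
    hcont.continuousAt (isOpen_Ioi.mem_nhds (by norm_num))
  have hneg0 : deriv (deriv (phifun β p)) 0 < 0 := by
    rw [deriv2_phifun_zero]
    nlinarith [mul_pos hβ hp]
  have hev : ∀ᶠ u in nhds (0:ℝ), deriv (deriv (phifun β p)) u < 0 :=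
    hcontAt.eventually_lt_const hneg0
  rw [Metric.eventually_nhds_iff] at hev
  obtain ⟨δ, hδ, hball⟩ := hev
  refine ⟨2 + min δ 1, by have := lt_min hδ one_pos; linarith, ?_⟩
  intro γ hγ2 hγ0 ub hub heq
  obtain ⟨hub0, hub1⟩ := hub
  have hγpos : (0:ℝ) < γ := by linarith
  have hE : Efun β p ub = γ - 1 - γ * ub := heq.symm
  have hone_add : 1 + Efun β p ub = γ * (1 - ub) := by rw [hE]; ring
  have hγ1ub : (0:ℝ) < γ * (1 - ub) := by
    rw [← hone_add]; exact one_add_Efun_pos β p ub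
  have hfub : hfun β p ub = (γ * (1 - ub))⁻¹ := by rw [hfun_eq, hone_add]
  -- ub is small: ub < δ
  have hrp : (1 + ub) ^ (-p) ≤ 1 :=
    Real.rpow_le_one_of_one_le_of_nonpos (by linarith) (by linarith)
  have hE1 : 1 ≤ Efun β p ub := by
    apply Real.one_le_exp
    have : β * ((1 + ub) ^ (-p) - 1) ≤ 0 :=
      mul_nonpos_of_nonneg_of_nonpos (le_of_lt hβ) (by linarith)
    linarith
  have hub_small : ub < δ := by
    have h1 : γ * ub ≤ γ - 2 := by rw [hE] at hE1; linarith
    have h2 : γ - 2 ≤ min δ 1 := by linarith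
    have h3 : 2 * ub < γ * ub := by nlinarith
    have h4 : min δ 1 ≤ δ := min_le_left δ 1
    linarith
  refine ⟨?_, ?_, ?_, ?_, ?_⟩
  · simp [ffun]
  · simp only [ffun, hfub]
    field_simp
    ring
  · rw [(hasDerivAt_ffun γ β p 0 (by norm_num)).deriv]
    rw [hfun_zero]
    norm_num
    linarith
  · rw [(hasDerivAt_ffun γ β p ub (by linarith)).deriv]
    have hD : deriv (hfun β p) ub < 0 := deriv_hfun_neg β p ub hβ hp (by linarith)
    have hH : 0 < hfun β p ub := hfun_pos β p ub
    have hkey : γ * hfun β p ub * (1 - ub) = 1 := by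
      rw [hfub]; field_simp
    nlinarith [mul_pos (mul_pos hγpos hub0) hH,
      mul_pos (mul_pos hγpos (mul_pos hub0 (by linarith : (0:ℝ) < 1 - ub))) (neg_pos.mpr hD)]
  · intro u hu0 huub
    have hu1 : (0:ℝ) < 1 + u := by linarith
    have hmem : u ∈ Ioi (-1 : ℝ) := by simp only [mem_Ioi]; linarith
    have hdiff : DifferentiableAt ℝ (deriv (phifun β p)) u :=
      (hd1.differentiableOn (by simp)).differentiableAt (isOpen_Ioi.mem_nhds hmem)
    have h1 : deriv (deriv (ffun γ β p)) u
        = deriv (fun t => γ * deriv (phifun β p) t - 1) u :=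
      (deriv_ffun_eventually γ β p u hu1).deriv_eq
    have h2 : deriv (fun t => γ * deriv (phifun β p) t - 1) u
        = γ * deriv (deriv (phifun β p)) u := by
      rw [deriv_sub_const, deriv_const_mul _ hdiff]
    rw [h1, h2]
    have hd2 : deriv (deriv (phifun β p)) u < 0 := by
      apply hball
      rw [Real.dist_eq, sub_zero, abs_of_pos hu0]
      linarith
    exact mul_neg_of_pos_of_neg hγpos hd2
end

section
/- Let γ > 2, β > 0 and p > 0. Then there exists exactly one u > 0 satisfying the transcendental equation γ − 1 − γu = exp(−β((1+u)^{−p} − 1)), and this solution ū lies in the open interval (0, 1). -/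
/-!
Rewrite the equation as `F u = γ - 1`, where `F = excitedBalance γ β p`.
Since the tension `(1 + u)^(-p)` decreases in `u`, `F` is strictly increasing for `u > -1`; as `F 0 = 1 < γ - 1`
and `F 1 > γ - 1`, the intermediate value theorem gives a root in `(0, 1)`, and strict
monotonicity makes it the only positive one.
-/

open Real Set

noncomputable def excitedBalance (γ β p u : ℝ) : ℝ :=
  exp (-(β * ((1 + u) ^ (-p) - 1))) + γ * u

section

variable {γ β p : ℝ}

theorem monotoneOn_exp_tension (hβ : 0 ≤ β) (hp : 0 ≤ p) :
    MonotoneOn (fun u : ℝ => exp (-(β * ((1 + u) ^ (-p) - 1)))) (Ioi (-1)) := by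
  intro x hx y _ hxy
  have hx' : 0 < 1 + x := by linarith [mem_Ioi.mp hx]
  have hpow : (1 + y) ^ (-p) ≤ (1 + x) ^ (-p) :=
    rpow_le_rpow_of_nonpos hx' (by linarith) (neg_nonpos.mpr hp)
  exact exp_le_exp.mpr (by nlinarith)

theorem strictMonoOn_excitedBalance (hγ : 0 < γ) (hβ : 0 ≤ β) (hp : 0 ≤ p) :
    StrictMonoOn (excitedBalance γ β p) (Ioi (-1)) := fun _ hx _ hy hxy =>
  add_lt_add_of_le_of_lt (monotoneOn_exp_tension hβ hp hx hy hxy.le)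
    (mul_lt_mul_of_pos_left hxy hγ)

theorem continuousOn_excitedBalance : ContinuousOn (excitedBalance γ β p) (Ioi (-1)) := by
  have hbase : ContinuousOn (fun u : ℝ => (1 + u) ^ (-p)) (Ioi (-1)) :=
    ContinuousOn.rpow_const (by fun_prop) fun u hu =>
      Or.inl (show 1 + u ≠ 0 by linarith [mem_Ioi.mp hu])
  exact ((continuousOn_const.mul (hbase.sub continuousOn_const)).neg.rexp).add
    (continuousOn_const.mul continuousOn_id)

theorem excitedBalance_zero : excitedBalance γ β p 0 = 1 := by
  simp [excitedBalance]

theorem sub_one_lt_excitedBalance_one : γ - 1 < excitedBalance γ β p 1 := by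
  have := exp_pos (-(β * ((1 + 1 : ℝ) ^ (-p) - 1)))
  rw [excitedBalance]
  linarith

theorem excitedBalance_eq_sub_one_iff {u : ℝ} :
    excitedBalance γ β p u = γ - 1 ↔ γ - 1 - γ * u = exp (-(β * ((1 + u) ^ (-p) - 1))) := by
  rw [excitedBalance]
  constructor <;> intro h <;> linarith

end

/-- for `γ > 2`, `β > 0`, `p > 0` the transcendental equation
`γ − 1 − γu = exp(−β((1+u)^{−p} − 1))` has exactly one positive solution,
and this solution lies in `(0, 1)`. -/
theorem excited_state_exists_unique
    (γ β p : ℝ) (hγ : 2 < γ) (hβ : 0 < β) (hp : 0 < p) :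
    ∃ ub : ℝ, ub ∈ Set.Ioo (0 : ℝ) 1 ∧
      γ - 1 - γ * ub = Real.exp (-(β * ((1 + ub) ^ (-p) - 1))) ∧
      ∀ u : ℝ, 0 < u → γ - 1 - γ * u = Real.exp (-(β * ((1 + u) ^ (-p) - 1))) → u = ub := by
  have hcont : ContinuousOn (excitedBalance γ β p) (Icc 0 1) :=
    continuousOn_excitedBalance.mono fun u hu => show -1 < u by linarith [hu.1]
  have hmem : γ - 1 ∈ Ioo (excitedBalance γ β p 0) (excitedBalance γ β p 1) :=
    ⟨by rw [excitedBalance_zero]; linarith, sub_one_lt_excitedBalance_one⟩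
  obtain ⟨ub, hub, hroot⟩ := intermediate_value_Ioo zero_le_one hcont hmem
  refine ⟨ub, hub, excitedBalance_eq_sub_one_iff.mp hroot, fun u hu hu_root => ?_⟩
  have hmono : StrictMonoOn (excitedBalance γ β p) (Ioi (-1)) :=
    strictMonoOn_excitedBalance (by linarith) hβ.le hp.le
  exact hmono.injOn (show -1 < u by linarith) (show -1 < ub by linarith [hub.1])
    ((excitedBalance_eq_sub_one_iff.mpr hu_root).trans hroot.symm)
end

section
/- Let β > 0 and p > 0, and suppose 0 < γ ≤ 2. Then there is no u > 0 satisfying γ − 1 − γu = exp(−β((1+u)^{−p} − 1)); consequently the rioting-activity system has no constant state with u > 0 in the open first quadrant. -/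
open Real

/-! Since `(1 + u) ^ (-p) < 1`, the exponential side of the equation is at least `1`, whereas
`γ - 1 - γ u < γ - 1 ≤ 1`. A constant state with `u > 0` yields a solution: dividing the first
equation by `u` gives `γ (1 - u) = 1 + exp (-β (v - 1))`, and the second gives `v = (1 + u) ^ (-p)`. -/

lemma one_le_exp_neg_mul_rpow_neg_sub_one {β p u : ℝ} (hβ : 0 ≤ β) (hp : 0 ≤ p) (hu : 0 ≤ u) :
    1 ≤ exp (-(β * ((1 + u) ^ (-p) - 1))) := by
  have : (1 + u) ^ (-p) ≤ 1 := rpow_le_one_of_one_le_of_nonpos (by linarith) (by linarith)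
  exact one_le_exp (by nlinarith)

lemma div_mul_mul_one_sub_sub_eq_zero_iff {γ D u : ℝ} (hD : D ≠ 0) (hu : u ≠ 0) :
    γ / D * u * (1 - u) - u = 0 ↔ γ * (1 - u) = D := by
  rw [show γ / D * u * (1 - u) - u = u * (γ * (1 - u) - D) / D by field_simp]
  simp [hD, hu, sub_eq_zero]

lemma one_sub_rpow_mul_eq_zero_iff {a p v : ℝ} (ha : 0 < a) :
    1 - a ^ p * v = 0 ↔ v = a ^ (-p) := by
  rw [rpow_neg ha.le, sub_eq_zero, eq_comm]
  exact ⟨eq_inv_of_mul_eq_one_right, fun h => h ▸ mul_inv_cancel₀ (rpow_pos_of_pos ha p).ne'⟩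

/-- for `0 < γ ≤ 2` there is no positive solution of the transcendental
equation, and hence no constant state of the rioting-activity system with `u > 0`
in the open first quadrant. -/
theorem no_excited_state_of_gamma_le_two
    (β p γ : ℝ) (hβ : 0 < β) (hp : 0 < p) (hγ0 : 0 < γ) (hγ : γ ≤ 2) :
    (∀ u : ℝ, 0 < u → γ - 1 - γ * u ≠ Real.exp (-(β * ((1 + u) ^ (-p) - 1)))) ∧
    ¬ ∃ u v : ℝ, 0 < u ∧ 0 < v ∧
        γ / (1 + Real.exp (-(β * (v - 1)))) * u * (1 - u) - u = 0 ∧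
        1 - (1 + u) ^ p * v = 0 := by
  have no_root : ∀ u : ℝ, 0 < u → γ - 1 - γ * u ≠ exp (-(β * ((1 + u) ^ (-p) - 1))) := by
    intro u hu h
    have := one_le_exp_neg_mul_rpow_neg_sub_one hβ.le hp.le hu.le
    nlinarith [mul_pos hγ0 hu]
  refine ⟨no_root, ?_⟩
  rintro ⟨u, v, hu, -, hu_eq, hv_eq⟩
  rw [div_mul_mul_one_sub_sub_eq_zero_iff (by positivity) hu.ne'] at hu_eq
  rw [one_sub_rpow_mul_eq_zero_iff (by linarith)] at hv_eq
  subst hv_eq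
  exact no_root u hu (by linarith)
end

section
/- Let β > 0 and p > 0 and define h(u) = 1/(1 + exp(−β((1+u)^{−p} − 1))). Then h is twice differentiable on [0, ∞) and h''(u) > 0 for every u ≥ 0; in particular h is strictly convex on [0, ∞). Moreover h''(u) ≥ (exp(−β((1+u)^{−p}−1)) / (1 + exp(−β((1+u)^{−p}−1)))²) · β p (p+1) / (1+u)^{p+2} for every u ≥ 0. -/
/-!
`h = σ ∘ φ` with `σ` the logistic sigmoid and `φ(u) = β((1+u)^{-p} - 1)`, so
`h'' = σ''(φ) φ'² + σ'(φ) φ''` with `σ' = σ(1-σ)` and `σ'' = σ'(1-2σ)`.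
For `u ≥ 0` we have `φ(u) ≤ 0`, hence `σ(φ) ≤ 1/2` and the first term is nonnegative, while the
second is exactly the stated lower bound, which is positive because `φ'' = βp(p+1)(1+u)^{-p-2}`.
-/

open Real

open Filter Topology

theorem hasDerivAt_deriv_comp {g g' g'' φ φ' : ℝ → ℝ} {φ'' x : ℝ}
    (hg : ∀ y, HasDerivAt g (g' y) y) (hg' : ∀ y, HasDerivAt g' (g'' y) y)
    (hφ : ∀ᶠ y in 𝓝 x, HasDerivAt φ (φ' y) y) (hφ' : HasDerivAt φ' φ'' x) :
    HasDerivAt (deriv (g ∘ φ)) (g'' (φ x) * φ' x ^ 2 + g' (φ x) * φ'') x := by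
  have hderiv : deriv (g ∘ φ) =ᶠ[𝓝 x] fun y ↦ g' (φ y) * φ' y :=
    hφ.mono fun y hy ↦ ((hg (φ y)).comp y hy).deriv
  refine ((((hg' (φ x)).comp x hφ.self_of_nhds).mul hφ').congr_of_eventuallyEq hderiv).congr_deriv ?_
  simp only [Function.comp_apply]
  ring

namespace Real

theorem hasDerivAt_sigmoid_mul_one_sub_sigmoid (x : ℝ) :
    HasDerivAt (fun t ↦ sigmoid t * (1 - sigmoid t))
      (sigmoid x * (1 - sigmoid x) * (1 - 2 * sigmoid x)) x := by
  have hσ := hasDerivAt_sigmoid x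
  exact (hσ.mul (hσ.const_sub 1)).congr_deriv (by ring)

theorem sigmoid_mul_one_sub_sigmoid_eq_exp_div (x : ℝ) :
    sigmoid x * (1 - sigmoid x) = exp (-x) / (1 + exp (-x)) ^ 2 := by
  have h : 1 + exp (-x) ≠ 0 := by positivity
  rw [sigmoid_def]
  field_simp
  ring

theorem sigmoid_mul_one_sub_sigmoid_pos (x : ℝ) : 0 < sigmoid x * (1 - sigmoid x) :=
  mul_pos (sigmoid_pos x) (sub_pos.2 (sigmoid_lt_one x))

theorem sigmoid_le_half_of_nonpos {x : ℝ} (hx : x ≤ 0) : sigmoid x ≤ 2⁻¹ :=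
  sigmoid_zero ▸ sigmoid_le hx

end Real

theorem hasDerivAt_one_add_rpow (r : ℝ) {u : ℝ} (hu : -1 < u) :
    HasDerivAt (fun v ↦ (1 + v) ^ r) (r * (1 + u) ^ (r - 1)) u := by
  have h1u : 1 + u ≠ 0 := by linarith
  simpa [Function.comp_def] using
    (hasDerivAt_rpow_const (Or.inl h1u)).comp u ((hasDerivAt_id u).const_add 1)

noncomputable def hfunInner (β p u : ℝ) : ℝ := β * ((1 + u) ^ (-p) - 1)

theorem hfun_eq_sigmoid_comp (β p : ℝ) : hfun β p = sigmoid ∘ hfunInner β p := by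
  ext u
  simp [hfun, hfunInner, sigmoid_def]

theorem hfunInner_nonpos {β p u : ℝ} (hβ : 0 ≤ β) (hp : 0 ≤ p) (hu : 0 ≤ u) :
    hfunInner β p u ≤ 0 :=
  mul_nonpos_of_nonneg_of_nonpos hβ
    (sub_nonpos.2 (rpow_le_one_of_one_le_of_nonpos (by linarith) (neg_nonpos.2 hp)))

theorem hasDerivAt_hfunInner (β p : ℝ) {u : ℝ} (hu : -1 < u) :
    HasDerivAt (hfunInner β p) (β * (-p * (1 + u) ^ (-p - 1))) u :=
  ((hasDerivAt_one_add_rpow (-p) hu).sub_const 1).const_mul β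

theorem hasDerivAt_deriv_hfunInner (β p : ℝ) {u : ℝ} (hu : -1 < u) :
    HasDerivAt (fun v ↦ β * (-p * (1 + v) ^ (-p - 1))) (β * p * (p + 1) / (1 + u) ^ (p + 2)) u := by
  refine (((hasDerivAt_one_add_rpow (-p - 1) hu).const_mul (-p)).const_mul β).congr_deriv ?_
  rw [show -p - 1 - 1 = -(p + 2) by ring, rpow_neg (by linarith)]
  ring

theorem differentiableAt_hfun (β p : ℝ) {u : ℝ} (hu : -1 < u) :
    DifferentiableAt ℝ (hfun β p) u := by
  rw [hfun_eq_sigmoid_comp]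
  exact differentiableAt_sigmoid.comp u (hasDerivAt_hfunInner β p hu).differentiableAt

theorem hasDerivAt_deriv_hfun (β p : ℝ) {u : ℝ} (hu : -1 < u) :
    HasDerivAt (deriv (hfun β p))
      (sigmoid (hfunInner β p u) * (1 - sigmoid (hfunInner β p u)) *
          (1 - 2 * sigmoid (hfunInner β p u)) * (β * (-p * (1 + u) ^ (-p - 1))) ^ 2 +
        sigmoid (hfunInner β p u) * (1 - sigmoid (hfunInner β p u)) *
          (β * p * (p + 1) / (1 + u) ^ (p + 2))) u := by
  rw [hfun_eq_sigmoid_comp]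
  exact hasDerivAt_deriv_comp hasDerivAt_sigmoid hasDerivAt_sigmoid_mul_one_sub_sigmoid
    ((lt_mem_nhds hu).mono fun v hv ↦ hasDerivAt_hfunInner β p hv) (hasDerivAt_deriv_hfunInner β p hu)

theorem le_deriv_deriv_hfun {β p u : ℝ} (hβ : 0 ≤ β) (hp : 0 ≤ p) (hu : 0 ≤ u) :
    (Real.exp (-(β * ((1 + u) ^ (-p) - 1))) /
          (1 + Real.exp (-(β * ((1 + u) ^ (-p) - 1)))) ^ 2) *
          (β * p * (p + 1) / (1 + u) ^ (p + 2)) ≤ deriv (deriv (hfun β p)) u := by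
  rw [(hasDerivAt_deriv_hfun β p (by linarith)).deriv]
  have hcurv : 0 ≤ sigmoid (hfunInner β p u) * (1 - sigmoid (hfunInner β p u)) *
      (1 - 2 * sigmoid (hfunInner β p u)) * (β * (-p * (1 + u) ^ (-p - 1))) ^ 2 := by
    have hσ := sigmoid_le_half_of_nonpos (hfunInner_nonpos hβ hp hu)
    refine mul_nonneg (mul_nonneg (sigmoid_mul_one_sub_sigmoid_pos _).le ?_) (sq_nonneg _)
    linarith
  rw [← hfunInner, ← sigmoid_mul_one_sub_sigmoid_eq_exp_div]
  linarith

/-- `h` is twice differentiable on `[0,∞)` with `h'' > 0`, hence strictly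
convex there, together with the explicit lower bound on `h''`. -/
theorem hfun_second_deriv_pos_strictConvex (β p : ℝ) (hβ : 0 < β) (hp : 0 < p) :
    (∀ u : ℝ, 0 ≤ u → DifferentiableAt ℝ (hfun β p) u ∧
      DifferentiableAt ℝ (deriv (hfun β p)) u ∧
      0 < deriv (deriv (hfun β p)) u ∧
      (Real.exp (-(β * ((1 + u) ^ (-p) - 1))) /
          (1 + Real.exp (-(β * ((1 + u) ^ (-p) - 1)))) ^ 2) *
          (β * p * (p + 1) / (1 + u) ^ (p + 2)) ≤ deriv (deriv (hfun β p)) u) ∧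
    StrictConvexOn ℝ (Set.Ici (0 : ℝ)) (hfun β p) := by
  have hpos : ∀ u : ℝ, 0 ≤ u → 0 < deriv (deriv (hfun β p)) u := fun u hu ↦ by
    refine lt_of_lt_of_le ?_ (le_deriv_deriv_hfun hβ.le hp.le hu)
    have h1u : 0 < 1 + u := by linarith
    have hσ' := sigmoid_mul_one_sub_sigmoid_pos (hfunInner β p u)
    rw [sigmoid_mul_one_sub_sigmoid_eq_exp_div] at hσ'
    exact mul_pos hσ' (by positivity)
  refine ⟨fun u hu ↦ ⟨differentiableAt_hfun β p (by linarith),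
    (hasDerivAt_deriv_hfun β p (by linarith)).differentiableAt, hpos u hu,
    le_deriv_deriv_hfun hβ.le hp.le hu⟩, ?_⟩
  refine strictConvexOn_of_deriv2_pos' (convex_Ici 0) (fun u hu ↦ ?_) (fun u hu ↦ hpos u hu)
  exact (differentiableAt_hfun β p (by linarith [Set.mem_Ici.1 hu])).continuousAt.continuousWithinAt
end

section
/- Let a > 0, d > 0, b < 0 and e > 0. Then b²e² − abde > 0, and the numbers ω₁ = (ad − 2be − 2√(b²e² − abde))/a² and ω₂ = (ad − 2be + 2√(b²e² − abde))/a² satisfy 0 < ω₁ < ω₂. Moreover, for every ω > 0 the discriminant expression (d − ωa)² + 4ωbe is negative if and only if ω₁ < ω < ω₂, so the eigenvalues λ = (1/(2c))( d + ωa ± √((d − ωa)² + 4ωbe) ) of the linearization are real and positive for ω ∈ (0, ω₁) ∪ (ω₂, ∞) and complex with positive real part for ω ∈ (ω₁, ω₂). -/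
open Real

/-!
As a quadratic in `ω`, the discriminant `(d - ω a)² + 4 ω b e` is `a² (ω - ω₁) (ω - ω₂)`, with
reduced discriminant `(a d - 2 b e)² - a² d² = 4 (b² e² - a b d e)`, positive because `b e < 0`.
The same identity shows `2 √(b² e² - a b d e) < a d - 2 b e`, so `ω₁ > 0`. Outside `[ω₁, ω₂]`
the eigenvalues are real, and `(d - ω a)² + 4 ω b e < (d + ω a)²` (again since `b e < 0 < a d`)
makes even the smaller one positive.
-/

section Discriminant

variable {a b d e : ℝ}

lemma discr_factor (ha : a ≠ 0) {S : ℝ} (hS : S ^ 2 = b ^ 2 * e ^ 2 - a * b * d * e) (ω : ℝ) :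
    (d - ω * a) ^ 2 + 4 * ω * b * e =
      a ^ 2 * ((ω - (a * d - 2 * b * e - 2 * S) / a ^ 2) *
        (ω - (a * d - 2 * b * e + 2 * S) / a ^ 2)) := by
  field_simp
  linear_combination 4 * hS

variable (ha : 0 < a) (hd : 0 < d) (hb : b < 0) (he : 0 < e)
include ha hd hb he

lemma reduced_discr_pos : 0 < b ^ 2 * e ^ 2 - a * b * d * e := by
  have hbe : 0 < -(b * e) := neg_pos.2 (mul_neg_of_neg_of_pos hb he)
  have hgap : 0 < a * d - b * e := by nlinarith [mul_pos ha hd]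
  linarith [mul_pos hbe hgap]

lemma two_mul_sqrt_reduced_discr_lt :
    2 * √(b ^ 2 * e ^ 2 - a * b * d * e) < a * d - 2 * b * e := by
  have hpos : 0 < a * d - 2 * b * e := by nlinarith [mul_pos ha hd]
  refine lt_of_pow_lt_pow_left₀ 2 hpos.le ?_
  rw [mul_pow, sq_sqrt (reduced_discr_pos ha hd hb he).le]
  nlinarith [mul_pos ha hd]

lemma discr_lt_sq_trace {ω : ℝ} (hω : 0 < ω) :
    (d - ω * a) ^ 2 + 4 * ω * b * e < (d + ω * a) ^ 2 := by
  nlinarith [mul_pos hω (mul_pos ha hd), mul_pos hω (mul_pos (neg_pos.2 hb) he)]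

end Discriminant

/-- the discriminant `(d − ωa)² + 4ωbe` is negative exactly for
`ω ∈ (ω₁, ω₂)`, with `0 < ω₁ < ω₂`, and the eigenvalues
`λ = (d + ωa ± √((d−ωa)² + 4ωbe))/(2c)` are real positive for `ω ∈ (0,ω₁) ∪ (ω₂,∞)`
and complex with positive real part for `ω ∈ (ω₁, ω₂)`. -/
theorem eigenvalue_structure_at_B
    (a d b e c ω₁ ω₂ : ℝ) (ha : 0 < a) (hd : 0 < d) (hb : b < 0) (he : 0 < e) (hc : 0 < c)
    (hω₁ : ω₁ = (a * d - 2 * b * e - 2 * Real.sqrt (b ^ 2 * e ^ 2 - a * b * d * e)) / a ^ 2)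
    (hω₂ : ω₂ = (a * d - 2 * b * e + 2 * Real.sqrt (b ^ 2 * e ^ 2 - a * b * d * e)) / a ^ 2) :
    0 < b ^ 2 * e ^ 2 - a * b * d * e ∧
    0 < ω₁ ∧ ω₁ < ω₂ ∧
    (∀ ω : ℝ, 0 < ω →
      ((d - ω * a) ^ 2 + 4 * ω * b * e < 0 ↔ ω₁ < ω ∧ ω < ω₂)) ∧
    (∀ ω : ℝ, 0 < ω → (ω < ω₁ ∨ ω₂ < ω) →
      0 ≤ (d - ω * a) ^ 2 + 4 * ω * b * e ∧
      0 < (d + ω * a - Real.sqrt ((d - ω * a) ^ 2 + 4 * ω * b * e)) / (2 * c) ∧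
      0 < (d + ω * a + Real.sqrt ((d - ω * a) ^ 2 + 4 * ω * b * e)) / (2 * c)) ∧
    (∀ ω : ℝ, ω₁ < ω → ω < ω₂ →
      (d - ω * a) ^ 2 + 4 * ω * b * e < 0 ∧ 0 < (d + ω * a) / (2 * c)) := by
  have hX := reduced_discr_pos ha hd hb he
  have ha2 : 0 < a ^ 2 := by positivity
  have hsqrt := sqrt_pos.2 hX
  have hω₁pos : 0 < ω₁ :=
    hω₁ ▸ div_pos (by linarith [two_mul_sqrt_reduced_discr_lt ha hd hb he]) ha2
  have hω₁₂ : ω₁ < ω₂ := by rw [hω₁, hω₂]; gcongr; linarith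
  have hfac : ∀ ω, (d - ω * a) ^ 2 + 4 * ω * b * e = a ^ 2 * ((ω - ω₁) * (ω - ω₂)) := by
    rw [hω₁, hω₂]; exact discr_factor ha.ne' (sq_sqrt hX.le)
  have hneg : ∀ ω, (d - ω * a) ^ 2 + 4 * ω * b * e < 0 ↔ ω₁ < ω ∧ ω < ω₂ := fun ω => by
    rw [hfac, ← not_le, mul_nonneg_iff_of_pos_left ha2, not_le, sub_mul_sub_neg_iff ω hω₁₂.le]
  have htrace : ∀ ω, 0 < ω → 0 < d + ω * a := fun ω hω => by positivity
  refine ⟨hX, hω₁pos, hω₁₂, fun ω _ => hneg ω, fun ω hω hout => ⟨?_, ?_, ?_⟩,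
    fun ω h₁ h₂ => ⟨(hneg ω).2 ⟨h₁, h₂⟩, div_pos (htrace ω (hω₁pos.trans h₁)) (by positivity)⟩⟩
  · rw [hfac]
    exact mul_nonneg ha2.le ((sub_mul_sub_pos_iff ω hω₁₂.le).2 hout).le
  · exact div_pos (sub_pos.2 ((sqrt_lt' (htrace ω hω)).2 (discr_lt_sq_trace ha hd hb he hω)))
      (by positivity)
  · exact div_pos (add_pos_of_pos_of_nonneg (htrace ω hω) (sqrt_nonneg _)) (by positivity)
end
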